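/- arXiv:2411.02770 — 2 statements merged into one kernel-verified Lean document; each statement's English description precedes it below -/
import Mathlib

section
/- Let S be a d-dimensional symmetric α-stable random vector with α ∈ (0,2] and let B be a Beta(β,γ) random variable (β,γ > 0) independent of S. Then η = (−log B)^(1/α) · S has characteristic function E[exp(i⟨η,u⟩)] = B(β + ‖u‖^α, γ)/B(β, γ), i.e. the Beta kernel K(u) = B(β+‖u‖^α, γ)/B(β,γ) is the characteristic function of η and hence positive definite on ℝ^d for every d ≥ 1. -/
open MeasureTheory ProbabilityTheory Real
open scoped ENNReal NNReal

/-- The Beta function `B(a,b) = Γ(a)Γ(b)/Γ(a+b)`. -/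
noncomputable def realBeta (a b : ℝ) : ℝ := Real.Gamma a * Real.Gamma b / Real.Gamma (a + b)

/-- The Beta(β,γ) distribution on `ℝ`. -/
noncomputable def betaMeasure (β γ : ℝ) : Measure ℝ :=
  volume.withDensity (fun x => ENNReal.ofReal
    (if x ∈ Set.Ioo (0:ℝ) 1 then x ^ (β-1) * (1-x) ^ (γ-1) / realBeta β γ else 0))

/-! Given `B = b`, the vector `η` is `S` scaled by `(-log b)^(1/α)`, so its characteristic function
at `u` is `exp(-(-log b)‖u‖^α) = b^(‖u‖^α)`; averaging over `B` gives the Beta moment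
`E[B^(‖u‖^α)] = B(β+‖u‖^α,γ)/B(β,γ)`. Positive definiteness holds for every characteristic function
`φ` of a law `ν`, since `∑ zᵢ z̄ⱼ φ(xᵢ - xⱼ) = ∫ |∑ zᵢ exp(i⟪y, xᵢ⟫)|² dν(y)`. -/

open Set
open scoped ComplexConjugate RealInnerProductSpace

lemma realBeta_eq_integral {a b : ℝ} (ha : 0 < a) (hb : 0 < b) :
    realBeta a b = ∫ x in Ioo 0 1, x ^ (a - 1) * (1 - x) ^ (b - 1) := by
  have hcongr : EqOn (fun x : ℝ => (x : ℂ) ^ ((a : ℂ) - 1) * (1 - (x : ℂ)) ^ ((b : ℂ) - 1))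
      (fun x => ((x ^ (a - 1) * (1 - x) ^ (b - 1) : ℝ) : ℂ)) (Ioc 0 1) := fun x hx => by
    simp only [Complex.ofReal_mul, Complex.ofReal_cpow hx.1.le,
      Complex.ofReal_cpow (sub_nonneg.2 hx.2), Complex.ofReal_sub, Complex.ofReal_one]
  rw [show realBeta a b = ProbabilityTheory.beta a b from rfl, beta_eq_betaIntegralReal a b ha hb,
    Complex.betaIntegral, intervalIntegral.integral_of_le zero_le_one,
    setIntegral_congr_fun measurableSet_Ioc hcongr, integral_complex_ofReal, Complex.ofReal_re,
    integral_Ioc_eq_integral_Ioo]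

lemma measurable_betaDensity (β γ : ℝ) :
    Measurable fun x : ℝ => ENNReal.ofReal
      (if x ∈ Ioo (0:ℝ) 1 then x ^ (β - 1) * (1 - x) ^ (γ - 1) / realBeta β γ else 0) :=
  (Measurable.ite measurableSet_Ioo (by fun_prop) measurable_const).ennreal_ofReal

lemma betaMeasure_ae_mem_Ioo (β γ : ℝ) : ∀ᵐ x ∂_root_.betaMeasure β γ, x ∈ Ioo (0 : ℝ) 1 := by
  rw [_root_.betaMeasure, ae_withDensity_iff (measurable_betaDensity β γ)]
  refine ae_of_all _ fun x hx => ?_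
  by_contra hx'
  simp [hx'] at hx

lemma integral_rpow_betaMeasure {β γ t : ℝ} (hβ : 0 < β) (hγ : 0 < γ) (hβt : 0 < β + t) :
    ∫ x, x ^ t ∂_root_.betaMeasure β γ = realBeta (β + t) γ / realBeta β γ := by
  have hdensity : ∀ x, (ENNReal.ofReal (if x ∈ Ioo (0:ℝ) 1 then
        x ^ (β - 1) * (1 - x) ^ (γ - 1) / realBeta β γ else 0)).toReal • x ^ t
      = (Ioo 0 1).indicator (fun x => x ^ (β + t - 1) * (1 - x) ^ (γ - 1) / realBeta β γ) x := by
    intro x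
    by_cases hx : x ∈ Ioo (0:ℝ) 1
    · have hx1 : 0 < 1 - x := sub_pos.2 hx.2
      have hdens_nonneg : 0 ≤ x ^ (β - 1) * (1 - x) ^ (γ - 1) / realBeta β γ :=
        div_nonneg (mul_nonneg (rpow_nonneg hx.1.le _) (rpow_nonneg hx1.le _))
          (beta_pos hβ hγ).le
      rw [if_pos hx, indicator_of_mem hx, ENNReal.toReal_ofReal hdens_nonneg, smul_eq_mul,
        show β + t - 1 = β - 1 + t by ring, rpow_add hx.1]
      ring
    · simp [hx]
  rw [_root_.betaMeasure, integral_withDensity_eq_integral_toReal_smul (measurable_betaDensity β γ)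
      (ae_of_all _ fun _ => ENNReal.ofReal_lt_top),
    funext hdensity, integral_indicator measurableSet_Ioo, integral_div,
    realBeta_eq_integral hβt hγ]

section CharFun

variable {Ω E : Type*} [MeasurableSpace Ω] {μ : Measure Ω}
  [NormedAddCommGroup E] [InnerProductSpace ℝ E] [MeasurableSpace E] [BorelSpace E]

lemma charFun_map_eq_integral {Y : Ω → E} (hY : AEMeasurable Y μ) (t : E) :
    charFun (μ.map Y) t = ∫ ω, Complex.exp (⟪Y ω, t⟫ * Complex.I) ∂μ := by
  rw [charFun_apply, integral_map hY (by fun_prop)]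

lemma ProbabilityTheory.IndepFun.integral_exp_inner_smul_eq_integral_charFun [IsFiniteMeasure μ]
    {𝓧 : Type*} [MeasurableSpace 𝓧] {X : Ω → 𝓧} {S : Ω → E} {f : 𝓧 → ℝ} (hf : Measurable f)
    (hX : AEMeasurable X μ) (hS : AEMeasurable S μ) (h : IndepFun X S μ) (u : E) :
    ∫ ω, Complex.exp (⟪f (X ω) • S ω, u⟫ * Complex.I) ∂μ
      = ∫ x, charFun (μ.map S) (f x • u) ∂(μ.map X) := by
  set F : 𝓧 × E → ℂ := fun p => Complex.exp ((f p.1 * ⟪p.2, u⟫ : ℝ) * Complex.I)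
  have hF : Measurable F := by fun_prop
  have hFint : Integrable F ((μ.map X).prod (μ.map S)) :=
    (integrable_const (1 : ℝ)).mono' hF.aestronglyMeasurable
      (ae_of_all _ fun p => (Complex.norm_exp_ofReal_mul_I _).le)
  calc ∫ ω, Complex.exp (⟪f (X ω) • S ω, u⟫ * Complex.I) ∂μ = ∫ ω, F (X ω, S ω) ∂μ := by
        simp only [F, real_inner_smul_left]
    _ = ∫ p, F p ∂((μ.map X).prod (μ.map S)) := by
        rw [← (indepFun_iff_map_prod_eq_prod_map_map hX hS).1 h,
          integral_map (hX.prodMk hS) hF.aestronglyMeasurable]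
    _ = ∫ x, ∫ s, F (x, s) ∂(μ.map S) ∂(μ.map X) := integral_prod F hFint
    _ = ∫ x, charFun (μ.map S) (f x • u) ∂(μ.map X) := by
        simp only [F, charFun_apply, real_inner_smul_right]

lemma sum_mul_conj_mul_charFun_sub_eq_integral_normSq (ν : Measure E) [IsFiniteMeasure ν]
    {ι : Type*} [Fintype ι] (x : ι → E) (z : ι → ℂ) :
    ∑ i, ∑ j, z i * conj (z j) * charFun ν (x i - x j)
      = ∫ y, (Complex.normSq (∑ i, z i * Complex.exp (⟪y, x i⟫ * Complex.I)) : ℂ) ∂ν := by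
  set e : ι → E → ℂ := fun i y => Complex.exp (⟪y, x i⟫ * Complex.I)
  have he_sub : ∀ i j y, Complex.exp (⟪y, x i - x j⟫ * Complex.I) = e i y * conj (e j y) := by
    intro i j y
    rw [← Complex.exp_conj, ← Complex.exp_add, map_mul, Complex.conj_ofReal, Complex.conj_I,
      inner_sub_right, Complex.ofReal_sub]
    ring_nf
  have hint : ∀ i j, Integrable (fun y => z i * conj (z j) * (e i y * conj (e j y))) ν := by
    intro i j
    simp_rw [← he_sub]
    refine ((integrable_const (1 : ℝ)).mono' (by fun_prop)
      (ae_of_all _ fun y => (Complex.norm_exp_ofReal_mul_I _).le)).const_mul _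
  calc ∑ i, ∑ j, z i * conj (z j) * charFun ν (x i - x j)
      = ∑ i, ∑ j, ∫ y, z i * conj (z j) * (e i y * conj (e j y)) ∂ν := by
        simp_rw [charFun_apply, he_sub, integral_const_mul]
    _ = ∫ y, ∑ i, ∑ j, z i * conj (z j) * (e i y * conj (e j y)) ∂ν := by
        rw [integral_finsetSum _ fun i _ => integrable_finsetSum _ fun j _ => hint i j]
        exact Finset.sum_congr rfl fun i _ => (integral_finsetSum _ fun j _ => hint i j).symm
    _ = ∫ y, (Complex.normSq (∑ i, z i * e i y) : ℂ) ∂ν := by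
        congr with y
        rw [← Complex.mul_conj, map_sum, Finset.sum_mul_sum]
        simp only [map_mul]
        exact Finset.sum_congr rfl fun i _ => Finset.sum_congr rfl fun j _ => by ring

lemma re_sum_mul_conj_mul_charFun_sub_nonneg (ν : Measure E) [IsFiniteMeasure ν]
    {ι : Type*} [Fintype ι] (x : ι → E) (z : ι → ℂ) :
    0 ≤ (∑ i, ∑ j, z i * conj (z j) * charFun ν (x i - x j)).re := by
  rw [sum_mul_conj_mul_charFun_sub_eq_integral_normSq, integral_complex_ofReal,
    Complex.ofReal_re]
  exact integral_nonneg fun y => Complex.normSq_nonneg _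

lemma integral_exp_inner_neg_log_rpow_smul [IsFiniteMeasure μ] {α β γ : ℝ} (hα : 0 < α)
    (hβ : 0 < β) (hγ : 0 < γ) {S : Ω → E} {B : Ω → ℝ} (hS : AEMeasurable S μ)
    (hB : AEMeasurable B μ) (hSchar : ∀ v, charFun (μ.map S) v = Real.exp (-‖v‖ ^ α))
    (hBlaw : μ.map B = _root_.betaMeasure β γ) (hindep : IndepFun B S μ) (u : E) :
    ∫ ω, Complex.exp (⟪(-log (B ω)) ^ (1 / α) • S ω, u⟫ * Complex.I) ∂μ
      = (realBeta (β + ‖u‖ ^ α) γ / realBeta β γ : ℝ) := by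
  have hscale : ∀ b ∈ Ioo (0:ℝ) 1,
      charFun (μ.map S) ((-log b) ^ (1 / α) • u) = ((b ^ ‖u‖ ^ α : ℝ) : ℂ) := by
    intro b hb
    have hlog : 0 ≤ -log b := neg_nonneg.2 (log_nonpos hb.1.le hb.2.le)
    rw [hSchar, norm_smul, norm_of_nonneg (rpow_nonneg hlog _),
      mul_rpow (rpow_nonneg hlog _) (norm_nonneg u), ← rpow_mul hlog,
      one_div_mul_cancel hα.ne', rpow_one, rpow_def_of_pos hb.1]
    ring_nf
  rw [hindep.integral_exp_inner_smul_eq_integral_charFun (f := fun b => (-log b) ^ (1 / α))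
      (by fun_prop) hB hS u, hBlaw,
    integral_congr_ae ((betaMeasure_ae_mem_Ioo β γ).mono hscale), integral_complex_ofReal,
    integral_rpow_betaMeasure hβ hγ (by positivity)]

end CharFun

/-- `η = (-log B)^(1/α) • S` has characteristic function
`B(β+‖u‖^α,γ)/B(β,γ)`; in particular this Beta kernel is positive definite on `ℝ^d`
for every `d ≥ 1`. -/
theorem stmt8 {d : ℕ} {Ω : Type*} [MeasurableSpace Ω] (μ : Measure Ω) [IsProbabilityMeasure μ]
    (α β γ : ℝ) (hα : α ∈ Set.Ioc (0:ℝ) 2) (hβ : 0 < β) (hγ : 0 < γ)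
    (S : Ω → EuclideanSpace ℝ (Fin d)) (B : Ω → ℝ)
    (hSmeas : Measurable S) (hBmeas : Measurable B)
    (hS : ∀ u : EuclideanSpace ℝ (Fin d),
      ∫ ω, Complex.exp (Complex.I * (inner ℝ (S ω) u : ℝ)) ∂μ = Real.exp (-(‖u‖ ^ α)))
    (hB : μ.map B = _root_.betaMeasure β γ)
    (hindep : IndepFun B S μ) :
    (∀ u : EuclideanSpace ℝ (Fin d),
      ∫ ω, Complex.exp (Complex.I *
          (inner ℝ ((-Real.log (B ω)) ^ (1/α) • S ω) u : ℝ)) ∂μ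
        = (realBeta (β + ‖u‖ ^ α) γ / realBeta β γ : ℝ))
    ∧ ∀ (N : ℕ) (x : Fin N → EuclideanSpace ℝ (Fin d)) (z : Fin N → ℝ),
        0 ≤ ∑ i, ∑ j, z i * z j * (realBeta (β + ‖x i - x j‖ ^ α) γ / realBeta β γ) := by
  set η : Ω → EuclideanSpace ℝ (Fin d) := fun ω => (-Real.log (B ω)) ^ (1/α) • S ω
  have hη : Measurable η := ((measurable_log.comp hBmeas).neg.pow_const _).smul hSmeas
  have hSchar : ∀ v, charFun (μ.map S) v = Real.exp (-‖v‖ ^ α) := fun v => by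
    rw [charFun_map_eq_integral hSmeas.aemeasurable]
    simpa only [mul_comm] using hS v
  have hchar : ∀ u, ∫ ω, Complex.exp (⟪η ω, u⟫ * Complex.I) ∂μ
      = (realBeta (β + ‖u‖ ^ α) γ / realBeta β γ : ℝ) :=
    integral_exp_inner_neg_log_rpow_smul hα.1 hβ hγ hSmeas.aemeasurable hBmeas.aemeasurable
      hSchar hB hindep
  refine ⟨fun u => by simpa only [mul_comm] using hchar u, fun N x z => ?_⟩
  have hpos := re_sum_mul_conj_mul_charFun_sub_nonneg (μ.map η) x (fun i => (z i : ℂ))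
  simp only [charFun_map_eq_integral hη.aemeasurable, hchar, Complex.conj_ofReal,
    ← Complex.ofReal_mul, ← Complex.ofReal_sum, Complex.ofReal_re] at hpos
  exact hpos
end

section
/- Let F have the Fisher–Snedecor F(2β,2γ) distribution with β,γ > 0. Then its Laplace transform is E[exp(−sF)] = (Γ(β+γ)/Γ(γ)) · U(β, 1−γ, (γ/β)·s) for all s > 0, where U is the Tricomi confluent hypergeometric function with integral representation U(a,b,z) = (1/Γ(a)) ∫₀^∞ e^(−zt) t^(a−1) (1+t)^(b−a−1) dt for a > 0, z > 0. -/
open MeasureTheory ProbabilityTheory Real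
open scoped ENNReal NNReal

/-- The Fisher–Snedecor `F(2β,2γ)` distribution on `ℝ`. -/
noncomputable def fisherMeasure (β γ : ℝ) : Measure ℝ :=
  volume.withDensity (fun x => ENNReal.ofReal
    (if 0 < x then (1 / (x * realBeta β γ)) * (β*x) ^ β * γ ^ γ / (β*x + γ) ^ (β+γ) else 0))

/-- The Tricomi confluent hypergeometric function, via its integral representation
`U(a,b,z) = (1/Γ(a)) ∫₀^∞ e^(-zt) t^(a-1) (1+t)^(b-a-1) dt` for `a > 0`, `z > 0`. -/
noncomputable def tricomiU (a b z : ℝ) : ℝ :=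
  (1 / Real.Gamma a) * ∫ t in Set.Ioi (0:ℝ), Real.exp (-(z*t)) * t ^ (a-1) * (1+t) ^ (b-a-1)

/-- the Laplace transform of an `F(2β,2γ)` random variable is
`E[exp (-s F)] = (Γ(β+γ)/Γ(γ)) U(β, 1-γ, (γ/β) s)` for `s > 0`. -/
theorem stmt16 {Ω : Type*} [MeasurableSpace Ω] (μ : Measure Ω) [IsProbabilityMeasure μ]
    (β γ : ℝ) (hβ : 0 < β) (hγ : 0 < γ)
    (F : Ω → ℝ) (hFmeas : Measurable F) (hF : μ.map F = fisherMeasure β γ) :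
    ∀ s : ℝ, 0 < s →
      ∫ ω, Real.exp (-(s * F ω)) ∂μ
        = (Real.Gamma (β + γ) / Real.Gamma γ) * tricomiU β (1 - γ) ((γ/β) * s) := by
  intro s hs
  have hΓβ := Real.Gamma_pos_of_pos hβ
  have hΓγ := Real.Gamma_pos_of_pos hγ
  have hΓβγ := Real.Gamma_pos_of_pos (add_pos hβ hγ)
  have hBpos : 0 < realBeta β γ := div_pos (mul_pos hΓβ hΓγ) hΓβγ
  set f : ℝ → ℝ := fun x =>
    if 0 < x then (1 / (x * realBeta β γ)) * (β*x) ^ β * γ ^ γ / (β*x + γ) ^ (β+γ) else 0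
    with hfdef
  have hfm : Measurable f := by
    apply Measurable.ite measurableSet_Ioi
    · exact (((((measurable_id).mul_const _).const_div 1).mul
        ((measurable_id.const_mul β).pow measurable_const)).mul_const _).div
        (((measurable_id.const_mul β).add_const γ).pow measurable_const)
    · exact measurable_const
  have hfnn : ∀ x, 0 ≤ f x := by
    intro x
    rw [hfdef]
    dsimp only
    split_ifs with hx
    · have h1 : 0 < β * x := mul_pos hβ hx
      have h2 : 0 < β * x + γ := by linarith
      positivity
    · exact le_refl 0
  have h1 : ∫ ω, Real.exp (-(s * F ω)) ∂μ
      = ∫ x, Real.exp (-(s * x)) ∂(fisherMeasure β γ) := by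
    rw [← hF]
    have hcont : Continuous fun x : ℝ => Real.exp (-(s * x)) := by continuity
    exact (integral_map hFmeas.aemeasurable hcont.aestronglyMeasurable).symm
  rw [h1]
  have h2 : fisherMeasure β γ = volume.withDensity (fun x => ((f x).toNNReal : ℝ≥0∞)) := rfl
  rw [h2, integral_withDensity_eq_integral_smul hfm.real_toNNReal]
  have h3 : (fun x => (f x).toNNReal • Real.exp (-(s * x)))
      = fun x => f x * Real.exp (-(s * x)) := by
    funext x
    rw [NNReal.smul_def, Real.coe_toNNReal _ (hfnn x), smul_eq_mul]
  rw [h3]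
  rw [← setIntegral_eq_integral_of_forall_compl_eq_zero
    (s := Set.Ioi (0:ℝ)) (f := fun x => f x * Real.exp (-(s * x)))
    (by
      intro x hx
      have : ¬ (0 < x) := hx
      rw [hfdef]
      simp [this])]
  have hb : (0:ℝ) < γ / β := div_pos hγ hβ
  have h4 := integral_comp_mul_left_Ioi (fun x => f x * Real.exp (-(s * x))) 0 hb
  rw [mul_zero] at h4
  have h5 : ∫ x in Set.Ioi (0:ℝ), f x * Real.exp (-(s * x))
      = (γ/β) • ∫ t in Set.Ioi (0:ℝ), f ((γ/β) * t) * Real.exp (-(s * ((γ/β) * t))) := by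
    rw [h4, smul_smul, mul_inv_cancel₀ hb.ne', one_smul]
  rw [h5, tricomiU, smul_eq_mul, ← integral_const_mul, ← mul_assoc,
    div_mul_div_comm, mul_one, ← integral_const_mul]
  apply setIntegral_congr_fun measurableSet_Ioi
  intro t ht
  have ht : (0:ℝ) < t := ht
  have hxt : (0:ℝ) < (γ/β) * t := mul_pos hb ht
  dsimp only
  rw [hfdef]
  dsimp only
  rw [if_pos hxt]
  have e1 : β * ((γ/β) * t) = γ * t := by field_simp
  have e2 : γ * t + γ = γ * (1 + t) := by ring
  have e3 : (γ * t) ^ β = γ ^ β * t ^ β := Real.mul_rpow hγ.le ht.le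
  have e4 : (γ * (1 + t)) ^ (β + γ) = γ ^ (β + γ) * (1 + t) ^ (β + γ) :=
    Real.mul_rpow hγ.le (by linarith)
  have e5 : γ ^ (β + γ) = γ ^ β * γ ^ γ := Real.rpow_add hγ β γ
  have e6 : t ^ (β - 1) = t ^ β / t := by
    rw [Real.rpow_sub ht, Real.rpow_one]
  have e7 : (1 + t) ^ (1 - γ - β - 1) = ((1 + t) ^ (β + γ))⁻¹ := by
    rw [show (1:ℝ) - γ - β - 1 = -(β + γ) by ring,
      Real.rpow_neg (by linarith : (0:ℝ) ≤ 1 + t)]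
  have e8 : Real.exp (-(s * ((γ/β) * t))) = Real.exp (-((γ/β * s) * t)) := by
    ring_nf
  rw [e1, e2, e3, e4, e5, e6, e7, e8, realBeta]
  have ht0 : t ≠ 0 := ht.ne'
  have hγβ : (0:ℝ) < γ ^ β := Real.rpow_pos_of_pos hγ β
  have hγγ : (0:ℝ) < γ ^ γ := Real.rpow_pos_of_pos hγ γ
  have htβ : (0:ℝ) < t ^ β := Real.rpow_pos_of_pos ht β
  have h1t : (0:ℝ) < (1 + t) ^ (β + γ) := Real.rpow_pos_of_pos (by linarith) _
  field_simp
end
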